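/- arXiv:1107.6008 — 4 statements merged into one kernel-verified Lean document; each statement's English description precedes it below -/
import Mathlib

section
/- Let L1 and L2 be Lie algebras over Z_p, each finitely generated free as a Z_p-module, such that for i = 1,2 the kernel of the bracket map ⋀² L_i → L_i is generated as a Z_p-module by decomposable elements x∧y with [x,y]=0. Then the product Lie algebra L0 = L1 ⊕ L2 also has the property that the kernel of its bracket map ⋀² L0 → L0 is generated by decomposable elements x∧y with [x,y]=0. -/
/-!
Let `ιᵢ : ⋀²Lᵢ → ⋀²(L₁ × L₂)` be induced by the injections and `wᵢ ∈ ⋀²Lᵢ` be the images of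
`w ∈ ⋀²(L₁ × L₂)` under the projections. Then `w - ι₁ w₁ - ι₂ w₂` is a combination of cross terms
`(x, 0) ∧ (0, y)`, which commute, so it lies in `⋀(L₁ × L₂)` and is killed by the bracket. As
`β₀ ∘ ιᵢ` is `βᵢ` followed by the injection, `w ∈ ker β₀` forces `wᵢ ∈ ker βᵢ = ⋀Lᵢ`, and `ιᵢ`
carries `⋀Lᵢ` into `⋀(L₁ × L₂)`.
-/

open ExteriorAlgebra

/-- The wedge `x ∧ y` as an element of the exterior square `⋀[R]^2 M`. -/
noncomputable def wedge2 (R : Type*) {M : Type*} [CommRing R] [AddCommGroup M] [Module R M]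
    (x y : M) : ⋀[R]^2 M :=
  ⟨ExteriorAlgebra.ιMulti R 2 ![x, y],
    ExteriorAlgebra.ιMulti_range R 2 (Set.mem_range_self _)⟩

/-- The submodule `⋀L ⊆ ⋀²L` generated by the decomposable elements `x∧y` with `⁅x,y⁆ = 0`. -/
noncomputable def wedgeDecomp (R L : Type*) [CommRing R] [LieRing L] [LieAlgebra R L] :
    Submodule R (⋀[R]^2 L) :=
  Submodule.span R {w | ∃ x y : L, ⁅x, y⁆ = 0 ∧ w = wedge2 R x y}

/-- The product of two Lie rings, with componentwise bracket. -/
instance prodLieRing (L₁ L₂ : Type*) [LieRing L₁] [LieRing L₂] : LieRing (L₁ × L₂) where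
  bracket x y := (⁅x.1, y.1⁆, ⁅x.2, y.2⁆)
  add_lie x y z := by ext <;> simp [add_lie]
  lie_add x y z := by ext <;> simp [lie_add]
  lie_self x := by ext <;> simp
  leibniz_lie x y z := by ext <;> simp

instance prodLieAlgebra (R L₁ L₂ : Type*) [CommRing R] [LieRing L₁] [LieRing L₂]
    [LieAlgebra R L₁] [LieAlgebra R L₂] : LieAlgebra R (L₁ × L₂) where
  lie_smul t x y := Prod.ext (lie_smul t x.1 y.1) (lie_smul t x.2 y.2)

section ExteriorSquare

variable {R M N : Type*} [CommRing R] [AddCommGroup M] [Module R M] [AddCommGroup N] [Module R N]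

theorem coe_wedge2 (x y : M) : (wedge2 R x y : ExteriorAlgebra R M) = ι R x * ι R y := by
  simp [wedge2, ιMulti_apply]

theorem wedge2_add_left (x x' y : M) : wedge2 R (x + x') y = wedge2 R x y + wedge2 R x' y :=
  Subtype.ext <| by simp only [Submodule.coe_add, coe_wedge2, map_add, add_mul]

theorem wedge2_add_right (x y y' : M) : wedge2 R x (y + y') = wedge2 R x y + wedge2 R x y' :=
  Subtype.ext <| by simp only [Submodule.coe_add, coe_wedge2, map_add, mul_add]

theorem wedge2_swap (x y : M) : wedge2 R y x = -wedge2 R x y :=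
  Subtype.ext <| by
    simp only [Submodule.coe_neg, coe_wedge2]
    exact eq_neg_of_add_eq_zero_left (ι_add_mul_swap y x)

theorem wedge2_eq_ιMulti (x y : M) : wedge2 R x y = exteriorPower.ιMulti R 2 ![x, y] := rfl

theorem exteriorPower.ιMulti_two (m : Fin 2 → M) :
    exteriorPower.ιMulti R 2 m = wedge2 R (m 0) (m 1) := by
  rw [wedge2_eq_ιMulti]
  congr
  ext i
  fin_cases i <;> rfl

theorem exteriorPower.map_wedge2 (f : M →ₗ[R] N) (x y : M) :
    exteriorPower.map 2 f (wedge2 R x y) = wedge2 R (f x) (f y) := by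
  rw [wedge2_eq_ιMulti, exteriorPower.map_apply_ιMulti, exteriorPower.ιMulti_two]
  rfl

theorem span_range_wedge2 :
    Submodule.span R (Set.range fun p : M × M => wedge2 R p.1 p.2) = ⊤ := by
  rw [eq_top_iff, ← exteriorPower.ιMulti_span R 2 M]
  refine Submodule.span_mono ?_
  rintro _ ⟨m, rfl⟩
  exact ⟨(m 0, m 1), (exteriorPower.ιMulti_two m).symm⟩

theorem LinearMap.range_le_of_forall_wedge2_mem {f : ⋀[R]^2 M →ₗ[R] N} {p : Submodule R N}
    (h : ∀ x y, f (wedge2 R x y) ∈ p) : LinearMap.range f ≤ p := by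
  rw [LinearMap.range_eq_map, ← span_range_wedge2, Submodule.map_span, Submodule.span_le]
  rintro _ ⟨_, ⟨⟨x, y⟩, rfl⟩, rfl⟩
  exact h x y

theorem LinearMap.ext_wedge2 {f g : ⋀[R]^2 M →ₗ[R] N}
    (h : ∀ x y, f (wedge2 R x y) = g (wedge2 R x y)) : f = g := by
  have : LinearMap.range (f - g) ≤ ⊥ :=
    LinearMap.range_le_of_forall_wedge2_mem fun x y => by simp [h]
  exact sub_eq_zero.mp (LinearMap.range_eq_bot.mp (le_bot_iff.mp this))

end ExteriorSquare

section Lie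

variable {R L L' : Type*} [CommRing R] [LieRing L] [LieAlgebra R L] [LieRing L'] [LieAlgebra R L']

theorem wedge2_mem_wedgeDecomp {x y : L} (h : ⁅x, y⁆ = 0) : wedge2 R x y ∈ wedgeDecomp R L :=
  Submodule.subset_span ⟨x, y, h, rfl⟩

theorem wedgeDecomp_le_ker {β : ⋀[R]^2 L →ₗ[R] L} (hβ : ∀ x y, β (wedge2 R x y) = ⁅x, y⁆) :
    wedgeDecomp R L ≤ LinearMap.ker β := by
  rw [wedgeDecomp, Submodule.span_le]
  rintro _ ⟨x, y, hxy, rfl⟩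
  simp [hβ, hxy]

theorem LieHom.map_wedgeDecomp_le (f : L →ₗ⁅R⁆ L') :
    (wedgeDecomp R L).map (exteriorPower.map 2 (f : L →ₗ[R] L')) ≤ wedgeDecomp R L' := by
  rw [wedgeDecomp, Submodule.map_span, Submodule.span_le]
  rintro _ ⟨_, ⟨x, y, hxy, rfl⟩, rfl⟩
  rw [exteriorPower.map_wedge2]
  exact wedge2_mem_wedgeDecomp (by simp [← f.map_lie, hxy])

theorem LieHom.bracket_comp_exteriorPower_map {β : ⋀[R]^2 L →ₗ[R] L} {β' : ⋀[R]^2 L' →ₗ[R] L'}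
    (hβ : ∀ x y, β (wedge2 R x y) = ⁅x, y⁆) (hβ' : ∀ x y, β' (wedge2 R x y) = ⁅x, y⁆)
    (f : L →ₗ⁅R⁆ L') :
    β' ∘ₗ exteriorPower.map 2 (f : L →ₗ[R] L') = (f : L →ₗ[R] L') ∘ₗ β :=
  LinearMap.ext_wedge2 fun x y => by simp [exteriorPower.map_wedge2, hβ, hβ']

end Lie

section Prod

variable {R L₁ L₂ : Type*} [CommRing R] [LieRing L₁] [LieRing L₂] [LieAlgebra R L₁]
  [LieAlgebra R L₂]

theorem wedge2_inl_inr_mem_wedgeDecomp (x : L₁) (y : L₂) :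
    wedge2 R (x, 0) (0, y) ∈ wedgeDecomp R (L₁ × L₂) :=
  wedge2_mem_wedgeDecomp (Prod.ext (lie_zero x) (zero_lie y))

theorem sub_inl_fst_sub_inr_snd_mem_wedgeDecomp (w : ⋀[R]^2 (L₁ × L₂)) :
    w - exteriorPower.map 2 (LinearMap.inl R L₁ L₂) (exteriorPower.map 2 (LinearMap.fst R L₁ L₂) w)
      - exteriorPower.map 2 (LinearMap.inr R L₁ L₂) (exteriorPower.map 2 (LinearMap.snd R L₁ L₂) w)
      ∈ wedgeDecomp R (L₁ × L₂) := by
  let D := LinearMap.id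
    - exteriorPower.map 2 (LinearMap.inl R L₁ L₂) ∘ₗ exteriorPower.map 2 (LinearMap.fst R L₁ L₂)
    - exteriorPower.map 2 (LinearMap.inr R L₁ L₂) ∘ₗ exteriorPower.map 2 (LinearMap.snd R L₁ L₂)
  suffices LinearMap.range D ≤ wedgeDecomp R (L₁ × L₂) from this ⟨w, rfl⟩
  refine LinearMap.range_le_of_forall_wedge2_mem fun ⟨a, b⟩ ⟨c, d⟩ => ?_
  have hsplit : ∀ (x : L₁) (y : L₂), ((x, y) : L₁ × L₂) = (x, 0) + (0, y) := by simp
  simp only [D, LinearMap.sub_apply, LinearMap.id_apply, LinearMap.comp_apply,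
    exteriorPower.map_wedge2, LinearMap.inl_apply, LinearMap.inr_apply, LinearMap.fst_apply,
    LinearMap.snd_apply]
  rw [hsplit a b, hsplit c d, wedge2_add_left, wedge2_add_right, wedge2_add_right,
    wedge2_swap (c, 0) (0, b)]
  convert Submodule.sub_mem _ (wedge2_inl_inr_mem_wedgeDecomp (R := R) a d)
    (wedge2_inl_inr_mem_wedgeDecomp c b) using 1
  abel

end Prod

theorem stmt1_general (p : ℕ) [Fact p.Prime]
    (L₁ L₂ : Type*) [LieRing L₁] [LieRing L₂] [LieAlgebra ℤ_[p] L₁] [LieAlgebra ℤ_[p] L₂]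
    (β₁ : (⋀[ℤ_[p]]^2 L₁) →ₗ[ℤ_[p]] L₁) (hβ₁ : ∀ x y : L₁, β₁ (wedge2 ℤ_[p] x y) = ⁅x, y⁆)
    (β₂ : (⋀[ℤ_[p]]^2 L₂) →ₗ[ℤ_[p]] L₂) (hβ₂ : ∀ x y : L₂, β₂ (wedge2 ℤ_[p] x y) = ⁅x, y⁆)
    (h₁ : LinearMap.ker β₁ = wedgeDecomp ℤ_[p] L₁)
    (h₂ : LinearMap.ker β₂ = wedgeDecomp ℤ_[p] L₂)
    (β₀ : (⋀[ℤ_[p]]^2 (L₁ × L₂)) →ₗ[ℤ_[p]] (L₁ × L₂))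
    (hβ₀ : ∀ x y : L₁ × L₂, β₀ (wedge2 ℤ_[p] x y) = ⁅x, y⁆) :
    LinearMap.ker β₀ = wedgeDecomp ℤ_[p] (L₁ × L₂) := by
  refine le_antisymm (fun w hw => ?_) (wedgeDecomp_le_ker hβ₀)
  set ι₁ := exteriorPower.map 2 (LinearMap.inl ℤ_[p] L₁ L₂)
  set ι₂ := exteriorPower.map 2 (LinearMap.inr ℤ_[p] L₁ L₂)
  set w₁ := exteriorPower.map 2 (LinearMap.fst ℤ_[p] L₁ L₂) w
  set w₂ := exteriorPower.map 2 (LinearMap.snd ℤ_[p] L₁ L₂) w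
  have hcross : w - ι₁ w₁ - ι₂ w₂ ∈ wedgeDecomp ℤ_[p] (L₁ × L₂) :=
    sub_inl_fst_sub_inr_snd_mem_wedgeDecomp w
  have hι₁ : ∀ a, β₀ (ι₁ a) = (β₁ a, 0) :=
    LinearMap.congr_fun (LieHom.bracket_comp_exteriorPower_map hβ₁ hβ₀ (LieHom.inl ℤ_[p] L₁ L₂))
  have hι₂ : ∀ a, β₀ (ι₂ a) = (0, β₂ a) :=
    LinearMap.congr_fun (LieHom.bracket_comp_exteriorPower_map hβ₂ hβ₀ (LieHom.inr ℤ_[p] L₁ L₂))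
  have hβ := wedgeDecomp_le_ker hβ₀ hcross
  rw [LinearMap.mem_ker, map_sub, map_sub, hw, hι₁, hι₂] at hβ
  have hw₁ : w₁ ∈ wedgeDecomp ℤ_[p] L₁ := h₁ ▸ by simpa using congrArg Prod.fst hβ
  have hw₂ : w₂ ∈ wedgeDecomp ℤ_[p] L₂ := h₂ ▸ by simpa using congrArg Prod.snd hβ
  rw [show w = ι₁ w₁ + ι₂ w₂ + (w - ι₁ w₁ - ι₂ w₂) by abel]
  exact add_mem (add_mem ((LieHom.inl ℤ_[p] L₁ L₂).map_wedgeDecomp_le ⟨w₁, hw₁, rfl⟩)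
    ((LieHom.inr ℤ_[p] L₁ L₂).map_wedgeDecomp_le ⟨w₂, hw₂, rfl⟩)) hcross

/-- Let `L₁` and `L₂` be Lie algebras over `ℤ_p`, each finitely generated free as a
`ℤ_p`-module, such that for `i = 1,2` the kernel of the bracket map `⋀² Lᵢ → Lᵢ` is generated
as a `ℤ_p`-module by decomposable elements `x∧y` with `⁅x,y⁆ = 0`.  Then the product Lie
algebra `L₀ = L₁ ⊕ L₂` (with componentwise bracket) has the same property. -/
theorem stmt1 (p : ℕ) [Fact p.Prime]
    (L₁ L₂ : Type*) [LieRing L₁] [LieRing L₂] [LieAlgebra ℤ_[p] L₁] [LieAlgebra ℤ_[p] L₂]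
    [Module.Free ℤ_[p] L₁] [Module.Finite ℤ_[p] L₁]
    [Module.Free ℤ_[p] L₂] [Module.Finite ℤ_[p] L₂]
    (β₁ : (⋀[ℤ_[p]]^2 L₁) →ₗ[ℤ_[p]] L₁) (hβ₁ : ∀ x y : L₁, β₁ (wedge2 ℤ_[p] x y) = ⁅x, y⁆)
    (β₂ : (⋀[ℤ_[p]]^2 L₂) →ₗ[ℤ_[p]] L₂) (hβ₂ : ∀ x y : L₂, β₂ (wedge2 ℤ_[p] x y) = ⁅x, y⁆)
    (h₁ : LinearMap.ker β₁ = wedgeDecomp ℤ_[p] L₁)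
    (h₂ : LinearMap.ker β₂ = wedgeDecomp ℤ_[p] L₂)
    (β₀ : (⋀[ℤ_[p]]^2 (L₁ × L₂)) →ₗ[ℤ_[p]] (L₁ × L₂))
    (hβ₀ : ∀ x y : L₁ × L₂, β₀ (wedge2 ℤ_[p] x y) = ⁅x, y⁆) :
    LinearMap.ker β₀ = wedgeDecomp ℤ_[p] (L₁ × L₂) :=
  stmt1_general p L₁ L₂ β₁ hβ₁ β₂ hβ₂ h₁ h₂ β₀ hβ₀
end

section
/- In a reduced root system Φ, let α0, α1, β0, β1, γ be five roots (with α0,α1,β0,β1 possibly equal) such that α0 + β0 = γ = α1 + β1. Then in each of the pairs (α0+α1, α0+β1), (β0+α1, β0+β1), (α1+α0, α1+β0), (β1+α0, β1+β0), at least one member is not a root of Φ. -/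
/-!
Put `r₃ = -γ`. Each of the four claims then says that there are no roots `u, r₁, r₂, r₃` with
`r₁ + r₂ + r₃ = 0` such that `u + r₁`, `u + r₂` and `u + r₃` are all roots (below, `u = P.root i`
and `rₐ = P.root jₐ`).

The Cartan integers `mₐ = ⟨rₐ, u^∨⟩` sum to `0`, and each is at most `1` since root strings have
length at most `4`. Hence two of them, say `m₁` and `m₂`, lie in `{0, 1}`, which forces
`|r₁| = |r₂| = |u|` for the canonical invariant form `B`. In each of the configurations
`(m₁, m₂) = (0, 0), (1, 0), (1, 1)` the Gram matrix of `u, r₁, r₂` is then known up to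
`d = B(r₁, r₂)`, and the integrality of `⟨u, r₃^∨⟩` and of one pairing between two of the roots
`u + rₐ` is incompatible with `|r₃|² > 0` and `|u + r₃|² > 0`.
-/

/-- A reduced root system in a finite-dimensional real vector space `V`, given with a choice of
coroots: `coroot α` is the linear form `⟨·, α^∨⟩`. -/
structure RootSystemData (V : Type*) [AddCommGroup V] [Module ℝ V] where
  /-- the set of roots -/
  Φ : Set V
  finite : Φ.Finite
  span_eq : Submodule.span ℝ Φ = ⊤
  zero_not_mem : (0 : V) ∉ Φ
  neg_mem : ∀ α ∈ Φ, -α ∈ Φ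
  reduced : ∀ α ∈ Φ, ∀ c : ℝ, c • α ∈ Φ → c = 1 ∨ c = -1
  /-- the coroot `α^∨`, viewed as the linear form `⟨·, α^∨⟩` on `V` -/
  coroot : V → (V →ₗ[ℝ] ℝ)
  coroot_self : ∀ α ∈ Φ, coroot α α = 2
  reflect_mem : ∀ α ∈ Φ, ∀ β ∈ Φ, β - coroot α β • α ∈ Φ
  integral : ∀ α ∈ Φ, ∀ β ∈ Φ, ∃ n : ℤ, coroot α β = (n : ℝ)

open Set Module

lemma intCast_mul_le_or_le {R : Type*} [Ring R] [LinearOrder R] [IsStrictOrderedRing R]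
    (z c : ℤ) {x : R} (hx : 0 ≤ x) : (z : R) * x ≤ (c - 1) * x ∨ c * x ≤ (z : R) * x := by
  rcases le_or_gt z (c - 1) with h | h
  · exact .inl (mul_le_mul_of_nonneg_right (by exact_mod_cast h) hx)
  · exact .inr (mul_le_mul_of_nonneg_right (by exact_mod_cast (show c ≤ z by omega)) hx)

namespace RootPairing

section Crystallographic

variable {ι R M N : Type*} [CommRing R] [CharZero R] [IsDomain R]
  [AddCommGroup M] [Module R M] [AddCommGroup N] [Module R N]
  {P : RootPairing ι R M N} {i j k j₁ j₂ j₃ : ι}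

omit [IsDomain R] in
lemma pairingIn_add_add_eq_zero [P.IsCrystallographic]
    (hsum : P.root j₁ + P.root j₂ + P.root j₃ = 0) (i : ι) :
    P.pairingIn ℤ j₁ i + P.pairingIn ℤ j₂ i + P.pairingIn ℤ j₃ i = 0 := by
  have h : P.root j₃ = (-1 : ℤ) • P.root j₁ + (-1 : ℤ) • P.root j₂ := by
    rw [eq_neg_of_add_eq_zero_right hsum]
    module
  rw [pairingIn_eq_add_of_root_eq_smul_add_smul h]
  simp only [neg_smul, one_smul]
  ring

variable [Finite ι] [P.IsCrystallographic] [P.IsReduced]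

lemma pairingIn_le_one_of_root_add_mem (h : P.root i + P.root j ∈ range P.root) :
    P.pairingIn ℤ j i ≤ 1 := by
  have := P.chainBotCoeff_sub_chainTopCoeff (P.linearIndependent_of_add_mem_range_root' h)
  have := P.one_le_chainTopCoeff_of_root_add_mem h
  have := P.chainBotCoeff_add_chainTopCoeff_le_three (i := i) (j := j)
  omega

lemma pairingIn_eq_one_of_root_eq_add (hk : P.root k = P.root i + P.root j)
    (hm : 0 ≤ P.pairingIn ℤ j i) : P.pairingIn ℤ i k = 1 := by
  have hm' := pairingIn_le_one_of_root_add_mem (hk ▸ mem_range_self (f := P.root) k)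
  have hki : P.pairingIn ℤ k i = 2 + P.pairingIn ℤ j i := by
    rw [pairingIn_eq_add_of_root_eq_add hk, P.pairingIn_same]
  have hik : 0 < P.pairingIn ℤ i k := (P.zero_lt_pairingIn_iff' ℤ).mp (by omega)
  have hki' : ¬(P.pairingIn ℤ k i = 2 ∧ P.pairingIn ℤ i k = 2) := by
    have : IsReflexive R M := .of_isPerfPair P.toLinearMap
    rw [pairingIn_two_two_iff]
    rintro rfl
    exact P.ne_zero j (by simpa using hk)
  -- Of the admissible pairs of Cartan integers, only `(2, 1)` and `(3, 1)` remain.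
  have := P.pairingIn_pairingIn_mem_set_of_isCrystal_of_isRed k i
  simp only [mem_insert_iff, mem_singleton_iff, Prod.mk.injEq] at this
  omega

end Crystallographic

section RootForm

variable {ι R M N : Type*} [Fintype ι] [Field R] [LinearOrder R] [IsStrictOrderedRing R]
  [AddCommGroup M] [Module R M] [AddCommGroup N] [Module R N]
  {P : RootPairing ι R M N}

omit [LinearOrder R] [IsStrictOrderedRing R] in
lemma rootForm_comm (x y : M) : P.RootForm x y = P.RootForm y x :=
  P.rootForm_symmetric.eq x y

lemma rootForm_root_self_pos (i : ι) : 0 < P.RootForm (P.root i) (P.root i) := by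
  obtain ⟨s, hs, hs'⟩ := (P.posRootForm R).exists_pos_eq i
  exact hs'.symm ▸ hs

variable [P.IsCrystallographic]

lemma two_mul_rootForm_root_root (i j : ι) :
    2 * P.RootForm (P.root i) (P.root j) =
      P.pairingIn ℤ i j * P.RootForm (P.root j) (P.root j) := by
  have := (P.posRootForm R).two_mul_apply_root_root i j
  rwa [← P.algebraMap_pairingIn ℤ, algebraMap_int_eq, eq_intCast] at this

lemma rootForm_root_root_eq (i j : ι) :
    P.RootForm (P.root i) (P.root j) =
      P.pairingIn ℤ i j / 2 * P.RootForm (P.root j) (P.root j) := by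
  linarith [two_mul_rootForm_root_root (P := P) i j]

variable [P.IsReduced] {i j j₁ j₂ j₃ : ι}

lemma rootForm_root_self_eq_of_root_add_mem (h : P.root i + P.root j ∈ range P.root)
    (hm : 0 ≤ P.pairingIn ℤ j i) :
    P.RootForm (P.root j) (P.root j) = P.RootForm (P.root i) (P.root i) := by
  obtain ⟨k, hk⟩ := h
  -- As `⟨α i, α k^∨⟩ = 1`, `|α k|² = 2 B(α i, α k) = (2 + m) |α i|²` with `m = ⟨α j, α i^∨⟩`,
  -- while expanding gives `|α k|² = (1 + m) |α i|² + |α j|²`.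
  have hik := two_mul_rootForm_root_root (P := P) i k
  have hki := two_mul_rootForm_root_root (P := P) k i
  rw [pairingIn_eq_one_of_root_eq_add hk hm] at hik
  rw [pairingIn_eq_add_of_root_eq_add hk, P.pairingIn_same] at hki
  rw [hk] at hik hki
  simp only [map_add, LinearMap.add_apply, rootForm_root_root_eq j i,
    rootForm_comm (P := P) (P.root i) (P.root j)] at hik hki
  push_cast at hik hki
  linarith

variable (hsum : P.root j₁ + P.root j₂ + P.root j₃ = 0)
include hsum

lemma root_add_notMem_of_pairingIn_eq_zero_of_eq_zero
    (h₁ : P.root i + P.root j₁ ∈ range P.root) (h₂ : P.root i + P.root j₂ ∈ range P.root)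
    (hm₁ : P.pairingIn ℤ j₁ i = 0) (hm₂ : P.pairingIn ℤ j₂ i = 0) :
    P.root i + P.root j₃ ∉ range P.root := by
  intro h₃
  have hm₃ : P.pairingIn ℤ j₃ i = 0 := by have := pairingIn_add_add_eq_zero hsum i; omega
  have hR₁ := rootForm_root_self_eq_of_root_add_mem h₁ hm₁.ge
  have hR₂ := rootForm_root_self_eq_of_root_add_mem h₂ hm₂.ge
  have hR₃ := rootForm_root_self_eq_of_root_add_mem h₃ hm₃.ge
  obtain ⟨k₁, hk₁⟩ := h₁
  obtain ⟨k₂, hk₂⟩ := h₂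
  have hk := two_mul_rootForm_root_root (P := P) k₂ k₁
  rw [hk₁, hk₂] at hk
  rw [eq_neg_of_add_eq_zero_right hsum] at hR₃
  simp only [map_add, map_neg, LinearMap.add_apply, LinearMap.neg_apply, hR₁, hR₂,
    rootForm_comm (P := P) (P.root i), rootForm_comm (P := P) (P.root j₂) (P.root j₁),
    rootForm_root_root_eq j₁ i, rootForm_root_root_eq j₂ i, hm₁, hm₂, Int.cast_zero] at hk hR₃
  have hU := rootForm_root_self_pos (P := P) i
  -- `|r₃|² = |u|²` forces `d = -|u|²/2`, so that `⟨u + r₂, (u + r₁)^∨⟩ = 1/2`.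
  rcases intCast_mul_le_or_le (P.pairingIn ℤ k₂ k₁) 1 hU.le with h | h <;>
    push_cast at h <;> linarith

lemma root_add_notMem_of_pairingIn_eq_one_of_eq_zero
    (h₁ : P.root i + P.root j₁ ∈ range P.root)
    (hm₁ : P.pairingIn ℤ j₁ i = 1) (hm₂ : P.pairingIn ℤ j₂ i = 0) :
    P.root i + P.root j₂ ∉ range P.root := by
  intro h₂
  have hR₁ := rootForm_root_self_eq_of_root_add_mem h₁ (by omega)
  have hR₂ := rootForm_root_self_eq_of_root_add_mem h₂ hm₂.ge
  obtain ⟨k₁, hk₁⟩ := h₁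
  obtain ⟨k₂, hk₂⟩ := h₂
  have hk := two_mul_rootForm_root_root (P := P) k₂ k₁
  have hn := two_mul_rootForm_root_root (P := P) i j₃
  have hR₃ := rootForm_root_self_pos (P := P) j₃
  rw [hk₁, hk₂] at hk
  rw [eq_neg_of_add_eq_zero_right hsum] at hn hR₃
  simp only [map_add, map_neg, LinearMap.add_apply, LinearMap.neg_apply, hR₁, hR₂,
    rootForm_comm (P := P) (P.root i), rootForm_comm (P := P) (P.root j₂) (P.root j₁),
    rootForm_root_root_eq j₁ i, rootForm_root_root_eq j₂ i, hm₁, hm₂, Int.cast_zero,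
    Int.cast_one] at hk hn hR₃
  have hU := rootForm_root_self_pos (P := P) i
  -- `⟨u, r₃^∨⟩ (2|u|² + 2d) = -|u|²` and `3 ⟨u + r₂, (u + r₁)^∨⟩ |u|² = 3|u|² + 2d`,
  -- while `|r₃|² = 2|u|² + 2d > 0`.
  rcases intCast_mul_le_or_le (P.pairingIn ℤ i j₃) 0 hR₃.le with h | h <;>
  rcases intCast_mul_le_or_le (P.pairingIn ℤ k₂ k₁) 1 hU.le with h' | h' <;>
    push_cast at h h' <;> linarith

lemma root_add_notMem_of_pairingIn_eq_one_of_eq_one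
    (h₁ : P.root i + P.root j₁ ∈ range P.root) (h₂ : P.root i + P.root j₂ ∈ range P.root)
    (hm₁ : P.pairingIn ℤ j₁ i = 1) (hm₂ : P.pairingIn ℤ j₂ i = 1) :
    P.root i + P.root j₃ ∉ range P.root := by
  rintro ⟨k₃, hk₃⟩
  have hR₁ := rootForm_root_self_eq_of_root_add_mem h₁ (by omega)
  have hR₂ := rootForm_root_self_eq_of_root_add_mem h₂ (by omega)
  obtain ⟨k₁, hk₁⟩ := h₁
  have hk := two_mul_rootForm_root_root (P := P) k₃ k₁
  have hn := two_mul_rootForm_root_root (P := P) i j₃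
  have hR₃ := rootForm_root_self_pos (P := P) j₃
  have hS₃ := rootForm_root_self_pos (P := P) k₃
  rw [hk₁, hk₃] at hk
  rw [hk₃] at hS₃
  rw [eq_neg_of_add_eq_zero_right hsum] at hk hn hR₃ hS₃
  simp only [map_add, map_neg, LinearMap.add_apply, LinearMap.neg_apply, hR₁, hR₂,
    rootForm_comm (P := P) (P.root i), rootForm_comm (P := P) (P.root j₂) (P.root j₁),
    rootForm_root_root_eq j₁ i, rootForm_root_root_eq j₂ i, hm₁, hm₂, Int.cast_one]
    at hk hn hR₃ hS₃
  have hU := rootForm_root_self_pos (P := P) i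
  -- `⟨u, r₃^∨⟩ (2|u|² + 2d) = -2|u|²` and `3 ⟨u + r₃, (u + r₁)^∨⟩ |u|² = -|u|² - 2d`,
  -- while `|r₃|² = 2|u|² + 2d > 0` and `|u + r₃|² = |u|² + 2d > 0`.
  rcases intCast_mul_le_or_le (P.pairingIn ℤ i j₃) 0 hR₃.le with h | h <;>
  rcases intCast_mul_le_or_le (P.pairingIn ℤ k₃ k₁) 0 hU.le with h' | h' <;>
    push_cast at h h' <;> linarith

lemma root_add_notMem_of_pairingIn_nonneg
    (h₁ : P.root i + P.root j₁ ∈ range P.root) (h₂ : P.root i + P.root j₂ ∈ range P.root)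
    (hm₁ : 0 ≤ P.pairingIn ℤ j₁ i) (hm₂ : 0 ≤ P.pairingIn ℤ j₂ i) :
    P.root i + P.root j₃ ∉ range P.root := by
  have := pairingIn_le_one_of_root_add_mem h₁
  have := pairingIn_le_one_of_root_add_mem h₂
  obtain h | h | h | h :
      (P.pairingIn ℤ j₁ i = 0 ∧ P.pairingIn ℤ j₂ i = 0) ∨
      (P.pairingIn ℤ j₁ i = 1 ∧ P.pairingIn ℤ j₂ i = 0) ∨
      (P.pairingIn ℤ j₁ i = 0 ∧ P.pairingIn ℤ j₂ i = 1) ∨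
      (P.pairingIn ℤ j₁ i = 1 ∧ P.pairingIn ℤ j₂ i = 1) := by omega
  · exact root_add_notMem_of_pairingIn_eq_zero_of_eq_zero hsum h₁ h₂ h.1 h.2
  · exact (root_add_notMem_of_pairingIn_eq_one_of_eq_zero hsum h₁ h.1 h.2 h₂).elim
  · exact (root_add_notMem_of_pairingIn_eq_one_of_eq_zero (j₃ := j₃)
      (by convert hsum using 1; abel) h₂ h.2 h.1 h₁).elim
  · exact root_add_notMem_of_pairingIn_eq_one_of_eq_one hsum h₁ h₂ h.1 h.2

theorem root_add_notMem_of_add_add_eq_zero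
    (h₁ : P.root i + P.root j₁ ∈ range P.root) (h₂ : P.root i + P.root j₂ ∈ range P.root) :
    P.root i + P.root j₃ ∉ range P.root := by
  intro h₃
  have := pairingIn_add_add_eq_zero hsum i
  have := pairingIn_le_one_of_root_add_mem h₁
  have := pairingIn_le_one_of_root_add_mem h₂
  have := pairingIn_le_one_of_root_add_mem h₃
  obtain h | h | h :
      (0 ≤ P.pairingIn ℤ j₁ i ∧ 0 ≤ P.pairingIn ℤ j₂ i) ∨
      (0 ≤ P.pairingIn ℤ j₁ i ∧ 0 ≤ P.pairingIn ℤ j₃ i) ∨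
      (0 ≤ P.pairingIn ℤ j₂ i ∧ 0 ≤ P.pairingIn ℤ j₃ i) := by omega
  · exact root_add_notMem_of_pairingIn_nonneg hsum h₁ h₂ h.1 h.2 h₃
  · exact root_add_notMem_of_pairingIn_nonneg (by convert hsum using 1; abel) h₁ h₃ h.1 h.2 h₂
  · exact root_add_notMem_of_pairingIn_nonneg (by convert hsum using 1; abel) h₂ h₃ h.1 h.2 h₁

end RootForm

end RootPairing

namespace RootSystemData

variable {V : Type*} [AddCommGroup V] [Module ℝ V] (P : RootSystemData V)

lemma mapsTo_preReflection {α : V} (hα : α ∈ P.Φ) :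
    MapsTo (preReflection α (P.coroot α)) P.Φ P.Φ :=
  fun β hβ => P.reflect_mem α hα β hβ

lemma coroot_injOn : InjOn P.coroot P.Φ := fun α hα β hβ h =>
  have : IsAddTorsionFree V := .of_isTorsionFree ℝ V
  eq_of_mapsTo_reflection_of_mem P.finite (P.coroot_self α hα) (P.coroot_self β hβ)
    (h ▸ P.coroot_self α hα) (h ▸ P.coroot_self β hβ) (P.mapsTo_preReflection hα)
    (P.mapsTo_preReflection hβ) hβ

variable [FiniteDimensional ℝ V]

noncomputable def toRootPairing : RootPairing P.Φ ℝ V (Dual ℝ V) :=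
  have : Finite P.Φ := P.finite.to_subtype
  RootPairing.mk'' (Dual.eval ℝ V) (Function.Embedding.subtype _)
    ⟨fun α => P.coroot α, fun α β h => Subtype.ext (P.coroot_injOn α.2 β.2 h)⟩
    (fun α => P.coroot_self α α.2)
    (fun α β ⟨γ, hγ⟩ => by
      subst hγ
      exact ⟨⟨_, P.reflect_mem α α.2 γ γ.2⟩, rfl⟩)
    (by simpa using P.span_eq)

@[simp] lemma toRootPairing_root (α : P.Φ) : P.toRootPairing.root α = α := rfl

lemma range_toRootPairing_root : range P.toRootPairing.root = P.Φ := Subtype.range_coe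

instance : P.toRootPairing.IsCrystallographic where
  exists_value α β := by
    obtain ⟨n, hn⟩ := P.integral β β.2 α α.2
    exact ⟨n, by rw [algebraMap_int_eq, eq_intCast, ← hn]; rfl⟩

instance : P.toRootPairing.IsReduced where
  eq_or_eq_neg α β h := by
    simp only [toRootPairing_root] at h ⊢
    have hα : (α : V) ≠ 0 := fun h0 => P.zero_not_mem (h0 ▸ α.2)
    rw [LinearIndependent.pair_iff' hα] at h
    push Not at h
    obtain ⟨c, hc⟩ := h
    rcases P.reduced α α.2 c (hc ▸ β.2) with rfl | rfl
    · simp [← hc]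
    · simp [← hc]

lemma add_notMem_or_add_notMem {u v r₁ r₂ : V} (hu : u ∈ P.Φ) (hv : v ∈ P.Φ)
    (hr₁ : r₁ ∈ P.Φ) (hr₂ : r₂ ∈ P.Φ) (hr : r₁ + r₂ ∈ P.Φ) (h : u + v = r₁ + r₂) :
    u + r₁ ∉ P.Φ ∨ u + r₂ ∉ P.Φ := by
  have : Fintype P.Φ := P.finite.fintype
  rw [← not_and_or]
  rintro ⟨h₁, h₂⟩
  refine P.toRootPairing.root_add_notMem_of_add_add_eq_zero (i := ⟨u, hu⟩) (j₁ := ⟨r₁, hr₁⟩)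
    (j₂ := ⟨r₂, hr₂⟩) (j₃ := ⟨-(r₁ + r₂), P.neg_mem _ hr⟩) ?_ ?_ ?_ ?_ <;>
    simp only [toRootPairing_root, range_toRootPairing_root]
  · abel
  · exact h₁
  · exact h₂
  · rw [← h, ← sub_eq_add_neg, sub_add_cancel_left]
    exact P.neg_mem v hv

end RootSystemData

/-- In a reduced root system Φ, let α₀, α₁, β₀, β₁, γ be five roots such that
α₀ + β₀ = γ = α₁ + β₁.  Then in each of the pairs (α₀+α₁, α₀+β₁), (β₀+α₁, β₀+β₁),
(α₁+α₀, α₁+β₀), (β₁+α₀, β₁+β₀) at least one member is not a root of Φ. -/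
theorem stmt3 (V : Type*) [AddCommGroup V] [Module ℝ V] [FiniteDimensional ℝ V]
    (P : RootSystemData V)
    (α₀ α₁ β₀ β₁ γ : V) (hα₀ : α₀ ∈ P.Φ) (hα₁ : α₁ ∈ P.Φ) (hβ₀ : β₀ ∈ P.Φ) (hβ₁ : β₁ ∈ P.Φ)
    (hγ : γ ∈ P.Φ) (h0 : α₀ + β₀ = γ) (h1 : α₁ + β₁ = γ) :
    (α₀ + α₁ ∉ P.Φ ∨ α₀ + β₁ ∉ P.Φ) ∧ (β₀ + α₁ ∉ P.Φ ∨ β₀ + β₁ ∉ P.Φ) ∧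
    (α₁ + α₀ ∉ P.Φ ∨ α₁ + β₀ ∉ P.Φ) ∧ (β₁ + α₀ ∉ P.Φ ∨ β₁ + β₀ ∉ P.Φ) := by
  have h : α₀ + β₀ = α₁ + β₁ := h0.trans h1.symm
  have hγ₀ : α₀ + β₀ ∈ P.Φ := h0 ▸ hγ
  have hγ₁ : α₁ + β₁ ∈ P.Φ := h1 ▸ hγ
  exact ⟨P.add_notMem_or_add_notMem hα₀ hβ₀ hα₁ hβ₁ hγ₁ h,
    P.add_notMem_or_add_notMem hβ₀ hα₀ hα₁ hβ₁ hγ₁ ((add_comm _ _).trans h),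
    P.add_notMem_or_add_notMem hα₁ hβ₁ hα₀ hβ₀ hγ₀ h.symm,
    P.add_notMem_or_add_notMem hβ₁ hα₁ hα₀ hβ₀ hγ₀ ((add_comm _ _).trans h.symm)⟩
end

section
/- Let Φ be a reduced root system with coroot lattice Q^∨ and weight lattice P = Hom(Q^∨, Z), and let R be a commutative ring in which 2 and 3 are invertible. For any two roots α, β ∈ Φ, the submodule Rα + Rβ of R ⊗_Z P = Hom(Q^∨, R) is a direct summand. -/
lemma cartan_bound {V : Type*} [AddCommGroup V] [Module ℝ V] (P : RootSystemData V)
    {α β : V} (hα : α ∈ P.Φ) (hβ : β ∈ P.Φ) (hind : ∀ c : ℝ, β ≠ c • α)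
    {a b : ℤ} (ha : P.coroot α β = (a : ℝ)) (hb : P.coroot β α = (b : ℝ)) :
    0 ≤ a * b ∧ a * b ≤ 3 := by
  classical
  -- reflections as linear maps
  set sα : V →ₗ[ℝ] V := LinearMap.id - (P.coroot α).smulRight α with hsα
  set sβ : V →ₗ[ℝ] V := LinearMap.id - (P.coroot β).smulRight β with hsβ
  have sα_apply : ∀ v, sα v = v - P.coroot α v • α := fun v => rfl
  have sβ_apply : ∀ v, sβ v = v - P.coroot β v • β := fun v => rfl
  have caa : P.coroot α α = 2 := P.coroot_self α hα
  have cbb : P.coroot β β = 2 := P.coroot_self β hβ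
  have sα_inv : ∀ v, sα (sα v) = v := by
    intro v
    simp only [sα_apply, map_sub, map_smul, caa, smul_eq_mul]
    module
  have sβ_inv : ∀ v, sβ (sβ v) = v := by
    intro v
    simp only [sβ_apply, map_sub, map_smul, cbb, smul_eq_mul]
    module
  set M : V →ₗ[ℝ] V := sα ∘ₗ sβ with hM
  set N : V →ₗ[ℝ] V := sβ ∘ₗ sα with hN
  have NM : ∀ v, N (M v) = v := by
    intro v; simp only [hM, hN, LinearMap.comp_apply, sα_inv, sβ_inv]
  have NMiter : ∀ (n : ℕ) (v : V), (⇑N)^[n] ((⇑M)^[n] v) = v := by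
    intro n
    induction n with
    | zero => intro v; rfl
    | succ n ih =>
      intro v
      rw [Function.iterate_succ_apply, Function.iterate_succ_apply', NM, ih]
  set t : ℝ := (a : ℝ) * (b : ℝ) - 2 with ht
  set w : ℕ → V := fun n => (⇑M)^[n] β with hw
  have w_zero : w 0 = β := rfl
  have w_succ : ∀ n, w (n + 1) = M (w n) := fun n => Function.iterate_succ_apply' _ _ _
  have w_add : ∀ n j, w (n + j) = (⇑M)^[n] (w j) := fun n j =>
    Function.iterate_add_apply _ n j β
  have w_mem : ∀ n, w n ∈ P.Φ := by
    intro n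
    induction n with
    | zero => exact hβ
    | succ n ih =>
      have h1 : sβ (w n) ∈ P.Φ := P.reflect_mem β hβ _ ih
      have h2 : sα (sβ (w n)) ∈ P.Φ := P.reflect_mem α hα _ h1
      rw [w_succ n]
      exact h2
  -- existence of a period
  have hninj : ¬ Function.Injective w := by
    intro hinj
    exact Set.infinite_of_injective_forall_mem (f := w) hinj w_mem P.finite
  obtain ⟨n, m, hnm, hne⟩ := Function.not_injective_iff.mp hninj
  wlog hlt : n < m generalizing n m
  · exact this m n hnm.symm (Ne.symm hne) (by omega)
  obtain ⟨k, hk0, hkβ⟩ : ∃ k, 0 < k ∧ w k = β := by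
    refine ⟨m - n, by omega, ?_⟩
    calc w (m - n) = (⇑N)^[n] ((⇑M)^[n] (w (m - n))) := (NMiter n _).symm
      _ = (⇑N)^[n] (w (n + (m - n))) := by rw [w_add]
      _ = (⇑N)^[n] (w m) := by rw [show n + (m - n) = m by omega]
      _ = (⇑N)^[n] (w n) := by rw [hnm]
      _ = β := NMiter n β
  -- the basic recurrence
  have Mβ : M β = (a : ℝ) • α - β := by
    simp only [hM, LinearMap.comp_apply, sα_apply, sβ_apply, map_sub, map_smul, cbb, caa, ha,
      smul_eq_mul]
    module
  have MMβ : M (M β) = t • M β - β := by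
    rw [Mβ]
    simp only [hM, LinearMap.comp_apply, sα_apply, sβ_apply, map_sub, map_smul, cbb, caa, ha, hb,
      smul_eq_mul, ht]
    module
  have wrec : ∀ n, w (n + 2) = t • w (n + 1) - w n := by
    intro n
    induction n with
    | zero =>
      have h1 : w 2 = M (M β) := by
        rw [show (2:ℕ) = 0 + 1 + 1 by rfl, w_succ, w_succ, w_zero]
      rw [h1, MMβ, show (0:ℕ) + 1 = 1 by rfl, show w 1 = M β by rw [← w_zero, ← w_succ], w_zero]
    | succ n ih =>
      have e1 : w (n + 3) = M (w (n + 2)) := w_succ (n + 2)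
      have e2 : w (n + 2) = M (w (n + 1)) := w_succ (n + 1)
      have e3 : w (n + 1) = M (w n) := w_succ n
      calc w (n + 1 + 2) = M (w (n + 2)) := e1
        _ = M (t • w (n + 1) - w n) := by rw [ih]
        _ = t • M (w (n + 1)) - M (w n) := by rw [map_sub, map_smul]
        _ = t • w (n + 1 + 1) - w (n + 1) := by rw [← e2, ← e3]
  have wper : ∀ n, w (n + k) = w n := by
    intro n
    rw [w_add n k, hkβ]
  -- case ab = 4 : impossible
  have hab4 : a * b ≠ 4 := by
    intro h4
    have ht2 : t = 2 := by
      have h4' : ((a * b : ℤ) : ℝ) = 4 := by rw [h4]; norm_num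
      push_cast at h4'
      rw [ht]; linarith
    have hdiff : ∀ n, w (n + 1) - w n = w 1 - w 0 := by
      intro n
      induction n with
      | zero => rfl
      | succ n ih =>
        rw [show n + 1 + 1 = n + 2 by rfl, wrec n, ht2]
        rw [show (2:ℝ) • w (n+1) - w n - w (n+1) = w (n+1) - w n by module, ih]
    have hsum : ∀ n, w n = w 0 + (n : ℝ) • (w 1 - w 0) := by
      intro n
      induction n with
      | zero => simp
      | succ n ih =>
        have h := hdiff n
        have h2 : w (n + 1) = w n + (w 1 - w 0) := by
          linear_combination (norm := module) h
        rw [h2, ih]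
        push_cast
        module
    have h0 : (k : ℝ) • (w 1 - w 0) = 0 := by
      have h1 := hsum k
      have e1 : w k = w 0 := by rw [hkβ, w_zero]
      rw [e1] at h1
      linear_combination (norm := module) -h1
    have hkne : (k : ℝ) ≠ 0 := Nat.cast_ne_zero.mpr (by omega)
    have hδ : w 1 - w 0 = 0 := by
      rcases smul_eq_zero.mp h0 with h | h
      · exact absurd h hkne
      · exact h
    have hw1 : M β = β := by
      have h1 : w 1 = w 0 := by linear_combination (norm := module) hδ
      rw [w_zero] at h1
      calc M β = M (w 0) := by rw [w_zero]
        _ = w 1 := (w_succ 0).symm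
        _ = β := h1
    rw [Mβ] at hw1
    have hβα : β = ((a : ℝ)/2) • α := by
      have h2 : (2:ℝ) • β = (a:ℝ) • α := by linear_combination (norm := module) -hw1
      have h3 := congrArg (fun v => (2:ℝ)⁻¹ • v) h2
      simp only [smul_smul] at h3
      rw [div_eq_inv_mul]
      rw [← h3]
      norm_num
    exact hind _ hβα
  -- case |ab - 2| ≥ 3 : impossible
  have habs : |a * b - 2| ≤ 2 := by
    by_contra hcon
    push_neg at hcon
    have ht3 : 3 ≤ |t| := by
      have h1 : (3:ℝ) ≤ |((a * b - 2 : ℤ) : ℝ)| := by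
        rw [← Int.cast_abs]
        exact_mod_cast hcon
      push_cast at h1
      rw [ht]
      convert h1 using 2
    set y : ℕ → ℝ := fun n => P.coroot β (w n) with hy
    have yrec : ∀ n, y (n + 2) = t * y (n + 1) - y n := by
      intro n
      simp only [hy, wrec n, map_sub, map_smul, smul_eq_mul]
    have yper : ∀ n, y (n + k) = y n := fun n => by simp only [hy, wper n]
    have y0 : y 0 = 2 := by
      simp only [hy, w_zero]
      exact cbb
    set F : Finset ℝ := (Finset.range k).image (fun n => |y n|) with hF
    have hFne : F.Nonempty := ⟨|y 0|, Finset.mem_image.mpr ⟨0, Finset.mem_range.mpr hk0, rfl⟩⟩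
    set mx : ℝ := F.max' hFne with hmx
    have hbound : ∀ n, |y n| ≤ mx := by
      intro n
      induction n using Nat.strong_induction_on with
      | _ n ih =>
        rcases lt_or_ge n k with h | h
        · exact F.le_max' _ (Finset.mem_image.mpr ⟨n, Finset.mem_range.mpr h, rfl⟩)
        · have h2 : y n = y (n - k) := by
            have h3 := yper (n - k)
            rw [show n - k + k = n by omega] at h3
            exact h3
          rw [h2]
          exact ih (n - k) (by omega)
    obtain ⟨n0, hn0mem, hn0⟩ := Finset.mem_image.mp (F.max'_mem hFne)
    -- recurrence centered at n0 + k
    have hrec := yrec (n0 + k - 1)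
    rw [show n0 + k - 1 + 1 = n0 + k by omega, show n0 + k - 1 + 2 = n0 + k + 1 by omega] at hrec
    have hyn0k : |y (n0 + k)| = mx := by rw [yper n0, hn0]
    have key : |t| * mx ≤ 2 * mx := by
      have h1 : t * y (n0 + k) = y (n0 + k + 1) + y (n0 + k - 1) := by linarith [hrec]
      calc |t| * mx = |t * y (n0 + k)| := by rw [abs_mul, hyn0k]
        _ = |y (n0 + k + 1) + y (n0 + k - 1)| := by rw [h1]
        _ ≤ |y (n0 + k + 1)| + |y (n0 + k - 1)| := abs_add_le _ _
        _ ≤ mx + mx := add_le_add (hbound _) (hbound _)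
        _ = 2 * mx := by ring
    have hmx0 : mx ≤ 0 := by nlinarith [abs_nonneg (y 0)]
    have h2mx : (2:ℝ) ≤ mx := by
      have h := hbound 0
      rw [y0] at h
      simpa using h
    linarith
  rw [abs_le] at habs
  omega


section Aux

open Submodule LinearMap

lemma aux_isCompl {R E : Type*} [CommRing R] [AddCommGroup E] [Module R E]
    (A B : E) (φ ψ : E →ₗ[R] R)
    (hA : φ A • A + ψ A • B = A) (hB : φ B • A + ψ B • B = B) :
    ∃ C : Submodule R E, IsCompl (Submodule.span R {A, B}) C := by
  set π : E →ₗ[R] E := φ.smulRight A + ψ.smulRight B with hπ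
  have π_apply : ∀ x, π x = φ x • A + ψ x • B := fun x => rfl
  have hAmem : A ∈ Submodule.span R ({A, B} : Set E) :=
    subset_span (by simp)
  have hBmem : B ∈ Submodule.span R ({A, B} : Set E) :=
    subset_span (by simp)
  have hmem : ∀ x, π x ∈ Submodule.span R ({A, B} : Set E) := fun x => by
    rw [π_apply]
    exact add_mem (smul_mem _ _ hAmem) (smul_mem _ _ hBmem)
  have hid : ∀ x ∈ Submodule.span R ({A, B} : Set E), π x = x := by
    intro x hx
    obtain ⟨u, v, rfl⟩ := Submodule.mem_span_pair.mp hx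
    have hπA : π A = A := by rw [π_apply, hA]
    have hπB : π B = B := by rw [π_apply, hB]
    rw [map_add, map_smul, map_smul, hπA, hπB]
  exact ⟨LinearMap.ker π, LinearMap.IsProj.isCompl ⟨hmem, hid⟩⟩

end Aux


/-- Let Φ be a reduced root system with coroot lattice Q^∨ (the ℤ-span of the coroots) and
weight lattice P = Hom(Q^∨, ℤ), and let R be a commutative ring in which 2 and 3 are
invertible.  For any two roots α, β ∈ Φ, the submodule Rα + Rβ of
R ⊗_ℤ P = Hom(Q^∨, R) is a direct summand.  Here the image ᾱ ∈ Hom(Q^∨, R) of a root α is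
characterised by ᾱ(h) = h(α) (an integer, cast into R) for h ∈ Q^∨. -/
theorem stmt4 (V : Type*) [AddCommGroup V] [Module ℝ V] [FiniteDimensional ℝ V]
    (P : RootSystemData V)
    (R : Type*) [CommRing R] (h2 : IsUnit (2 : R)) (h3 : IsUnit (3 : R))
    (α β : V) (hα : α ∈ P.Φ) (hβ : β ∈ P.Φ)
    (Q : Submodule ℤ (V →ₗ[ℝ] ℝ)) (hQ : Q = Submodule.span ℤ (P.coroot '' P.Φ))
    (A B : Q →ₗ[ℤ] R)
    (hA : ∀ (h : Q) (n : ℤ), (h : V →ₗ[ℝ] ℝ) α = (n : ℝ) → A h = (n : R))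
    (hB : ∀ (h : Q) (n : ℤ), (h : V →ₗ[ℝ] ℝ) β = (n : ℝ) → B h = (n : R)) :
    ∃ C : Submodule R (Q →ₗ[ℤ] R), IsCompl (Submodule.span R {A, B}) C := by
  classical
  have hαQ : P.coroot α ∈ Q := by
    rw [hQ]; exact Submodule.subset_span ⟨α, hα, rfl⟩
  have hβQ : P.coroot β ∈ Q := by
    rw [hQ]; exact Submodule.subset_span ⟨β, hβ, rfl⟩
  set Hα : Q := ⟨P.coroot α, hαQ⟩ with hHα
  set Hβ : Q := ⟨P.coroot β, hβQ⟩ with hHβ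
  have caa : P.coroot α α = 2 := P.coroot_self α hα
  have cbb : P.coroot β β = 2 := P.coroot_self β hβ
  obtain ⟨a, ha⟩ := P.integral α hα β hβ
  obtain ⟨b, hb⟩ := P.integral β hβ α hα
  -- evaluation maps, R-linear
  have evdef : ∀ h : Q, ∃ ev : (Q →ₗ[ℤ] R) →ₗ[R] R, ∀ f, ev f = f h := fun h =>
    ⟨{ toFun := fun f => f h, map_add' := fun f g => rfl, map_smul' := fun r f => rfl },
      fun f => rfl⟩
  obtain ⟨evα, hevα⟩ := evdef Hα
  obtain ⟨evβ, hevβ⟩ := evdef Hβ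
  -- values of A and B at the two coroots
  have hAα : A Hα = 2 := by
    have : (Hα : V →ₗ[ℝ] ℝ) α = ((2 : ℤ) : ℝ) := by rw [hHα]; exact_mod_cast caa
    have h := hA Hα 2 this
    push_cast at h
    exact h
  have hBβ : B Hβ = 2 := by
    have : (Hβ : V →ₗ[ℝ] ℝ) β = ((2 : ℤ) : ℝ) := by rw [hHβ]; exact_mod_cast cbb
    have h := hB Hβ 2 this
    push_cast at h
    exact h
  have hAβ : A Hβ = (b : R) := hA Hβ b hb
  have hBα : B Hα = (a : R) := hB Hα a ha
  by_cases hdep : ∃ c : ℝ, β = c • α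
  · -- dependent case : β = ± α
    obtain ⟨c, hc⟩ := hdep
    have hc1 : c = 1 ∨ c = -1 := by
      apply P.reduced α hα c
      rw [← hc]; exact hβ
    -- every element of Q takes an integer value at α
    have hint0 : ∀ h : V →ₗ[ℝ] ℝ, h ∈ Q → ∃ n : ℤ, h α = (n : ℝ) := by
      intro h hh
      rw [hQ] at hh
      induction hh using Submodule.span_induction with
      | mem x hx =>
        obtain ⟨γ, hγ, rfl⟩ := hx
        exact P.integral γ hγ α hα
      | zero => exact ⟨0, by simp⟩
      | add x y hx hy ihx ihy =>
        obtain ⟨n, hn⟩ := ihx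
        obtain ⟨m, hm⟩ := ihy
        exact ⟨n + m, by simp [hn, hm]⟩
      | smul z x hx ihx =>
        obtain ⟨n, hn⟩ := ihx
        refine ⟨z * n, ?_⟩
        have hzx : (z • x) α = z • (x α) := rfl
        rw [hzx, hn, zsmul_eq_mul]
        push_cast
        ring
    have hint : ∀ h : Q, ∃ n : ℤ, (h : V →ₗ[ℝ] ℝ) α = (n : ℝ) := fun h => hint0 h.1 h.2
    set u : R := ((h2.unit⁻¹ : Rˣ) : R) with hu
    have hu2 : u * 2 = 1 := by
      rw [hu]
      have := h2.unit.inv_mul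
      rwa [IsUnit.unit_spec] at this
    rcases hc1 with hc1 | hc1
    · -- β = α, B = A
      subst hc1
      rw [one_smul] at hc
      subst hc
      have hBA : B = A := by
        ext h
        obtain ⟨n, hn⟩ := hint h
        rw [hA h n hn, hB h n hn]
      refine aux_isCompl A B (u • evα) 0 ?_ ?_
      · simp [hevα, hAα, hu2, smul_smul]
      · simp [hevα, hBA, hAα, hu2, smul_smul]
    · -- β = -α, B = -A
      subst hc1
      have hc' : β = -α := by rw [hc]; module
      have hBA : B = -A := by
        ext h
        obtain ⟨n, hn⟩ := hint h
        have hnβ : (h : V →ₗ[ℝ] ℝ) β = ((-n : ℤ) : ℝ) := by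
          rw [hc', map_neg, hn]; push_cast; ring
        rw [hB h (-n) hnβ]
        simp [hA h n hn]
      refine aux_isCompl A B (u • evα) 0 ?_ ?_
      · simp [hevα, hAα, hu2, smul_smul]
      · rw [hBA]
        simp only [LinearMap.smul_apply, hevα, LinearMap.zero_apply, zero_smul, add_zero,
          LinearMap.neg_apply, hAα, smul_eq_mul]
        rw [mul_neg, neg_smul, hu2, one_smul]
  · -- independent case
    push_neg at hdep
    obtain ⟨hab0, hab3⟩ := cartan_bound P hα hβ hdep ha hb
    have hd : IsUnit ((4 - a * b : ℤ) : R) := by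
      have hcases : a * b = 0 ∨ a * b = 1 ∨ a * b = 2 ∨ a * b = 3 := by omega
      rcases hcases with h | h | h | h
      · have e : ((4 - 0 : ℤ) : R) = 2 * 2 := by push_cast; ring
        rw [h, e]; exact h2.mul h2
      · have e : ((4 - 1 : ℤ) : R) = 3 := by push_cast; ring
        rw [h, e]; exact h3
      · have e : ((4 - 2 : ℤ) : R) = 2 := by push_cast; ring
        rw [h, e]; exact h2
      · have e : ((4 - 3 : ℤ) : R) = 1 := by push_cast; ring
        rw [h, e]; exact isUnit_one
    set u : R := ((hd.unit⁻¹ : Rˣ) : R) with hu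
    have hud : u * ((4 - a * b : ℤ) : R) = 1 := by
      rw [hu]
      have := hd.unit.inv_mul
      rwa [IsUnit.unit_spec] at this
    refine aux_isCompl A B
      (u • ((2 : R) • evα - ((a : R) • evβ)))
      (u • ((2 : R) • evβ - ((b : R) • evα))) ?_ ?_
    · simp only [LinearMap.smul_apply, LinearMap.sub_apply, hevα, hevβ, hAα, hAβ, smul_eq_mul]
      rw [show u * (2 * 2 - (a : R) * (b : R)) = u * ((4 - a * b : ℤ) : R) by push_cast; ring,
        hud, show u * (2 * (b:R) - (b:R) * 2) = 0 by ring]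
      simp
    · simp only [LinearMap.smul_apply, LinearMap.sub_apply, hevα, hevβ, hBα, hBβ, smul_eq_mul]
      rw [show u * (2 * (a:R) - (a : R) * 2) = 0 by ring,
        show u * (2 * 2 - (b:R) * (a:R)) = u * ((4 - a * b : ℤ) : R) by push_cast; ring, hud]
      simp
end

section
/- Let Φ be a reduced root system, R a commutative ring in which 2 and 3 are invertible, and α, β ∈ Φ two roots with α ≠ ±β. Then there exists an element h ∈ R ⊗_Z Q^∨ such that α(h) = 1 and β(h) = 0. -/
private lemma aux_infinite {V : Type*} [AddCommGroup V] [Module ℝ V] (Φ : Set V)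
    (hfin : Φ.Finite) (v : ℕ → V) (hv : ∀ k, v k ∈ Φ) (g : V →ₗ[ℝ] ℝ) (s : ℝ) (hs : 2 ≤ s)
    (hrec : ∀ k, v (k + 2) = s • v (k + 1) - v k)
    (h0 : g (v 0) = 1) (h1 : 1 < g (v 1)) : False := by
  have key : ∀ k, 1 ≤ g (v k) ∧ g (v k) < g (v (k + 1)) := by
    intro k
    induction k with
    | zero => exact ⟨h0.ge, by rw [h0]; exact h1⟩
    | succ k ih =>
      have h2 : g (v (k + 2)) = s * g (v (k + 1)) - g (v k) := by
        rw [hrec]; simp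
      refine ⟨by linarith [ih.1, ih.2], ?_⟩
      rw [h2]
      nlinarith [ih.1, ih.2]
  have mono : StrictMono fun k => g (v k) := strictMono_nat_of_lt_succ fun k => (key k).2
  have inj : Function.Injective v := fun i j h => mono.injective (congrArg g h)
  exact (Set.infinite_of_injective_forall_mem inj hv) hfin

/-- The key bound: for `α ≠ ±β`, `0 ≤ ⟨β,α^∨⟩⟨α,β^∨⟩ ≤ 3`. -/
private lemma coxeter_bound {V : Type*} [AddCommGroup V] [Module ℝ V]
    (P : RootSystemData V) (α β : V) (hα : α ∈ P.Φ) (hβ : β ∈ P.Φ)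
    (hne : α ≠ β) (hne' : α ≠ -β) :
    0 ≤ P.coroot α β * P.coroot β α ∧ P.coroot α β * P.coroot β α ≤ 3 := by
  set a : ℝ := P.coroot α β with ha
  set b : ℝ := P.coroot β α with hb
  -- a linear functional with g α = 1, g β = 0
  obtain ⟨g, gα, gβ⟩ : ∃ g : V →ₗ[ℝ] ℝ, g α = 1 ∧ g β = 0 := by
    have hnm : α ∉ Submodule.span ℝ ({β} : Set V) := by
      intro h
      obtain ⟨c, hc⟩ := Submodule.mem_span_singleton.mp h
      rcases P.reduced β hβ c (hc ▸ hα) with h1 | h1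
      · exact hne (by rw [← hc, h1, one_smul])
      · exact hne' (by rw [← hc, h1, neg_one_smul])
    set S := Submodule.span ℝ ({β} : Set V)
    have hπ : S.mkQ α ≠ 0 := by
      simpa [Submodule.mkQ_apply, Submodule.Quotient.mk_eq_zero] using hnm
    obtain ⟨φ, hφ⟩ : ∃ φ : Module.Dual ℝ (V ⧸ S), φ (S.mkQ α) ≠ 0 := by
      by_contra h
      push_neg at h
      exact hπ ((Module.forall_dual_apply_eq_zero_iff ℝ _).mp h)
    refine ⟨(φ (S.mkQ α))⁻¹ • (φ.comp S.mkQ), ?_, ?_⟩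
    · simp only [LinearMap.smul_apply, LinearMap.comp_apply, smul_eq_mul]
      exact inv_mul_cancel₀ hφ
    · have hβS : S.mkQ β = 0 := by
        rw [Submodule.mkQ_apply, Submodule.Quotient.mk_eq_zero]
        exact Submodule.mem_span_singleton_self β
      simp [hβS]
  -- the linear maps s_α, s_β and w = s_α ∘ s_β
  set sA : V →ₗ[ℝ] V := LinearMap.id - (P.coroot α).smulRight α with hsA
  set sB : V →ₗ[ℝ] V := LinearMap.id - (P.coroot β).smulRight β with hsB
  set w : V →ₗ[ℝ] V := sA.comp sB with hw
  have hAα := P.coroot_self α hα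
  have hBβ := P.coroot_self β hβ
  set v : ℕ → V := fun k => (fun x => w x)^[k] α with hv
  have hvsucc : ∀ k, v (k + 1) = w (v k) := by
    intro k; simp [hv, Function.iterate_succ_apply']
  have hvΦ : ∀ k, v k ∈ P.Φ := by
    intro k
    induction k with
    | zero => simpa [hv] using hα
    | succ k ih =>
      rw [hvsucc]
      have h1 : sB (v k) ∈ P.Φ := by
        simpa [hsB, LinearMap.sub_apply] using P.reflect_mem β hβ (v k) ih
      have h2 : sA (sB (v k)) ∈ P.Φ := by
        simpa [hsA, LinearMap.sub_apply] using P.reflect_mem α hα (sB (v k)) h1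
      simpa [hw] using h2
  have hwα : w α = (a * b - 1) • α - b • β := by
    simp only [hw, hsA, hsB, LinearMap.comp_apply, LinearMap.sub_apply, LinearMap.id_apply,
      LinearMap.smulRight_apply, map_sub, map_smul, hAα, hBβ, ← ha, ← hb, smul_eq_mul]
    module
  have hwβ : w β = a • α - β := by
    simp only [hw, hsA, hsB, LinearMap.comp_apply, LinearMap.sub_apply, LinearMap.id_apply,
      LinearMap.smulRight_apply, map_sub, map_smul, hAα, hBβ, ← ha, ← hb, smul_eq_mul]
    module
  have hww : w (w α) = (a * b - 2) • (w α) - α := by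
    rw [hwα, map_sub, map_smul, map_smul, hwα, hwβ]
    module
  have hrec : ∀ k, v (k + 2) = (a * b - 2) • v (k + 1) - v k := by
    intro k
    induction k with
    | zero => rw [hvsucc, hvsucc]; simpa [hv] using hww
    | succ k ih =>
      calc v (k + 1 + 2) = w (v (k + 2)) := hvsucc (k + 2)
        _ = w ((a * b - 2) • v (k + 1) - v k) := by rw [ih]
        _ = (a * b - 2) • w (v (k + 1)) - w (v k) := by rw [map_sub, map_smul]
        _ = (a * b - 2) • v (k + 1 + 1) - v (k + 1) := by rw [← hvsucc, ← hvsucc]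
  have hg0 : g (v 0) = 1 := by simpa [hv] using gα
  have hg1 : g (v 1) = a * b - 1 := by
    have hv0 : v 0 = α := rfl
    rw [hvsucc, hv0, hwα]
    simp [gα, gβ]
  constructor
  · by_contra h
    push_neg at h
    -- a*b < 0; a, b integers, so a*b ≤ -1
    obtain ⟨na, hna⟩ := P.integral α hα β hβ
    obtain ⟨nb, hnb⟩ := P.integral β hβ α hα
    have hab : a * b ≤ -1 := by
      have : (na * nb : ℤ) < 0 := by
        have : ((na * nb : ℤ) : ℝ) < 0 := by push_cast [← hna, ← hnb, ← ha, ← hb]; exact h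
        exact_mod_cast this
      have : (na * nb : ℤ) ≤ -1 := by omega
      calc a * b = ((na * nb : ℤ) : ℝ) := by push_cast [← hna, ← hnb, ← ha, ← hb]; ring
        _ ≤ -1 := by exact_mod_cast this
    set v' : ℕ → V := fun k => (-1 : ℝ) ^ k • v k with hv'
    have hv'Φ : ∀ k, v' k ∈ P.Φ := by
      intro k
      rcases Nat.even_or_odd k with hk | hk
      · simpa [hv', hk.neg_one_pow] using hvΦ k
      · have : v' k = -(v k) := by simp [hv', hk.neg_one_pow]
        rw [this]; exact P.neg_mem _ (hvΦ k)
    have hrec' : ∀ k, v' (k + 2) = (2 - a * b) • v' (k + 1) - v' k := by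
      intro k
      simp only [hv', hrec k, pow_succ, smul_sub, smul_smul]
      module
    refine aux_infinite P.Φ P.finite v' hv'Φ g (2 - a * b) (by linarith) hrec' ?_ ?_
    · simpa [hv'] using hg0
    · have hg1' : g (v' 1) = 1 - a * b := by simp [hv', hg1]
      rw [hg1']; linarith
  · by_contra h
    push_neg at h
    obtain ⟨na, hna⟩ := P.integral α hα β hβ
    obtain ⟨nb, hnb⟩ := P.integral β hβ α hα
    have hab : 4 ≤ a * b := by
      have h3 : (3 : ℝ) < ((na * nb : ℤ) : ℝ) := by push_cast [← hna, ← hnb, ← ha, ← hb]; exact h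
      have : (3 : ℤ) < na * nb := by exact_mod_cast h3
      have : (4 : ℤ) ≤ na * nb := by omega
      calc (4:ℝ) ≤ ((na * nb : ℤ) : ℝ) := by exact_mod_cast this
        _ = a * b := by push_cast [← hna, ← hnb, ← ha, ← hb]; ring
    exact aux_infinite P.Φ P.finite v hvΦ g (a * b - 2) (by linarith) hrec hg0
      (by rw [hg1]; linarith)

/-- Let Φ be a reduced root system, R a commutative ring in which 2 and 3 are invertible, and
α, β ∈ Φ two roots with α ≠ ±β.  Then there exists an element h ∈ R ⊗_ℤ Q^∨ such that
α(h) = 1 and β(h) = 0.  We write h = ∑_{γ∈Φ} c_γ ⊗ H_γ with coefficients c : V → R supported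
on Φ, so that α(h) = ∑_γ c_γ · ⟨α, γ^∨⟩ where the integers n γ δ = ⟨δ, γ^∨⟩ are given by the
integrality of the root system. -/
theorem stmt5 (V : Type*) [AddCommGroup V] [Module ℝ V] [FiniteDimensional ℝ V]
    (P : RootSystemData V)
    (R : Type*) [CommRing R] (h2 : IsUnit (2 : R)) (h3 : IsUnit (3 : R))
    (α β : V) (hα : α ∈ P.Φ) (hβ : β ∈ P.Φ) (hne : α ≠ β) (hne' : α ≠ -β)
    (n : V → V → ℤ) (hn : ∀ γ ∈ P.Φ, ∀ δ ∈ P.Φ, ((n γ δ : ℤ) : ℝ) = P.coroot γ δ) :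
    ∃ c : V → R, (∑ γ ∈ P.finite.toFinset, c γ * (n γ α : R)) = 1 ∧
      (∑ γ ∈ P.finite.toFinset, c γ * (n γ β : R)) = 0 := by
  have hnαα : n α α = 2 := by
    have := hn α hα α hα
    rw [P.coroot_self α hα] at this
    exact_mod_cast this
  have hnββ : n β β = 2 := by
    have := hn β hβ β hβ
    rw [P.coroot_self β hβ] at this
    exact_mod_cast this
  set m : ℤ := n α β * n β α with hm
  have hmb : 0 ≤ m ∧ m ≤ 3 := by
    obtain ⟨hl, hu⟩ := coxeter_bound P α β hα hβ hne hne'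
    have hcast : ((m : ℤ) : ℝ) = P.coroot α β * P.coroot β α := by
      push_cast [hm, hn α hα β hβ, hn β hβ α hα]
      ring
    constructor
    · exact_mod_cast hcast ▸ hl
    · have : ((m : ℤ) : ℝ) ≤ 3 := by rw [hcast]; exact hu
      exact_mod_cast this
  have hunit : IsUnit ((4 - m : ℤ) : R) := by
    obtain ⟨h0, h3'⟩ := hmb
    interval_cases m
    · have h4 : (4 : R) = 2 * 2 := by norm_num
      simpa [h4] using h2.mul h2
    · simpa using h3
    · simpa using h2
    · simpa using isUnit_one
  classical
  obtain ⟨u, hu⟩ := hunit.exists_right_inv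
  refine ⟨fun γ => if γ = α then 2 * u else if γ = β then -(n α β : R) * u else 0, ?_, ?_⟩
  all_goals
    rw [← Finset.sum_subset (s₁ := ({α, β} : Finset V))
      (by intro x hx
          simp only [Finset.mem_insert, Finset.mem_singleton] at hx
          rcases hx with rfl | rfl <;> simp [Set.Finite.mem_toFinset, hα, hβ])
      (by intro x _ hx
          simp only [Finset.mem_insert, Finset.mem_singleton, not_or] at hx
          simp [hx.1, hx.2]),
      Finset.sum_pair hne]
  · simp only [if_pos rfl, if_neg hne.symm, if_neg (fun h : β = α => hne h.symm), if_pos rfl,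
      hnαα, hnββ]
    have hu' : ((4 : R) - (n α β : R) * (n β α : R)) * u = 1 := by
      push_cast [hm] at hu
      linear_combination hu
    push_cast
    linear_combination hu'
  · simp only [if_pos rfl, if_neg (fun h : β = α => hne h.symm), if_pos rfl, hnαα, hnββ]
    push_cast
    ring
end
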